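/- Let H be a bialgebra over a commutative ring R and let τ : H → H be an R-linear involution that is an algebra antimorphism and is either a coalgebra morphism or a coalgebra antimorphism. Let p_1, …, p_k ∈ H be primitive with τ(p_i) = p_i, and let p̄_1, …, p̄_k̄ ∈ H be primitive with τ(p̄_j) = −p̄_j (k, k̄ ≥ 0). Write P := Σ_{σ ∈ S_k} p_{σ(1)}⋯p_{σ(k)}. Then for every odd integer a ≥ 1: Ψ_a^+(p̄_1⋯p̄_k̄ · P) = (a·1_R)^k · (p̄_1⋯p̄_k̄ · P) and Ψ_a^+(P · p̄_1⋯p̄_k̄) = (a·1_R)^k · (P · p̄_1⋯p̄_k̄). -/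

import Mathlib

open TensorProduct

/-- Convolution product `f * g := m ∘ (f ⊗ g) ∘ Δ` of linear endomorphisms of a bialgebra. -/
noncomputable def convProd {R H : Type*} [CommRing R] [Ring H] [Bialgebra R H]
    (f g : H →ₗ[R] H) : H →ₗ[R] H :=
  LinearMap.mul' R H ∘ₗ TensorProduct.map f g ∘ₗ Coalgebra.comul

/-- `PsiAux τ n = (Ψ_{n+1}^+, Ψ_{n+1}^−)`: the hyperoctahedral riffle-shuffle operators,
defined by `Ψ_1^+ = id`, `Ψ_1^− = τ`, `Ψ_{a+1}^+ = id * Ψ_a^−`, `Ψ_{a+1}^− = τ * Ψ_a^+`. -/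
noncomputable def PsiAux {R H : Type*} [CommRing R] [Ring H] [Bialgebra R H]
    (τ : H →ₗ[R] H) : ℕ → (H →ₗ[R] H) × (H →ₗ[R] H)
  | 0 => (LinearMap.id, τ)
  | n + 1 => (convProd LinearMap.id (PsiAux τ n).2, convProd τ (PsiAux τ n).1)

/-- The operator `Ψ_a^+` (for `a ≥ 1`). -/
noncomputable def PsiPlus {R H : Type*} [CommRing R] [Ring H] [Bialgebra R H]
    (τ : H →ₗ[R] H) (a : ℕ) : H →ₗ[R] H := (PsiAux τ (a - 1)).1

/-- The operator `Ψ_a^−` (for `a ≥ 1`). -/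
noncomputable def PsiMinus {R H : Type*} [CommRing R] [Ring H] [Bialgebra R H]
    (τ : H →ₗ[R] H) (a : ℕ) : H →ₗ[R] H := (PsiAux τ (a - 1)).2

/-- `p` is a primitive element: `Δ p = 1 ⊗ p + p ⊗ 1`. -/
def IsPrimitive (R : Type*) {H : Type*} [CommRing R] [Ring H] [Bialgebra R H] (p : H) : Prop :=
  Coalgebra.comul (R := R) p = 1 ⊗ₜ[R] p + p ⊗ₜ[R] 1

/-- `τ` is a coalgebra morphism: `Δ ∘ τ = (τ ⊗ τ) ∘ Δ` and `ε ∘ τ = ε`. -/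
def IsCoalgMorph {R H : Type*} [CommRing R] [Ring H] [Bialgebra R H] (τ : H →ₗ[R] H) : Prop :=
  Coalgebra.comul ∘ₗ τ = TensorProduct.map τ τ ∘ₗ (Coalgebra.comul : H →ₗ[R] H ⊗[R] H) ∧
    Coalgebra.counit ∘ₗ τ = (Coalgebra.counit : H →ₗ[R] R)

/-- `τ` is a coalgebra antimorphism: `Δ ∘ τ = swap ∘ (τ ⊗ τ) ∘ Δ` and `ε ∘ τ = ε`. -/
def IsCoalgAntimorph {R H : Type*} [CommRing R] [Ring H] [Bialgebra R H] (τ : H →ₗ[R] H) : Prop :=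
  Coalgebra.comul ∘ₗ τ =
      (TensorProduct.comm R H H).toLinearMap ∘ₗ TensorProduct.map τ τ ∘ₗ
        (Coalgebra.comul : H →ₗ[R] H ⊗[R] H) ∧
    Coalgebra.counit ∘ₗ τ = (Coalgebra.counit : H →ₗ[R] R)

/-!
Write `D = id * τ`. Associativity of convolution gives `Ψ_{a+2}^+ = D * Ψ_a^+`. For a primitive `q`
with `τ q = -q`, primitivity and antimultiplicativity give `D(qx) = q D(x) - D(x) q` and
`D(xq) = 0`; hence `D * G` commutes with left and right multiplication by `q` whenever `G` does,
so every odd `Ψ_a^+` does, and the factor `p̄_1⋯p̄_k̄` can be pulled out.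

For a primitive `q` with `τ q = q`, the binomial expansion of `Δ(q^j)` gives `Ψ_a^±(q^j) = a^j q^j`.
By polarisation, `Σ_σ p_{σ(1)}⋯p_{σ(k)} = Σ_S (-1)^{k-|S|} (Σ_{i∈S} p_i)^k` is a signed sum of such
powers, hence an eigenvector of `Ψ_a^+` for the eigenvalue `a^k`.
-/

section Polarization

open Finset

lemma sum_pow_eq_sum_ofFn_prod {A ι : Type*} [Semiring A] [Fintype ι] (f : ι → A) (n : ℕ) :
    (∑ i, f i) ^ n = ∑ g : Fin n → ι, (List.ofFn fun j => f (g j)).prod := by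
  induction n with
  | zero => simp
  | succ n ih =>
    rw [pow_succ', ih, ← (Fin.consEquiv fun _ => ι).sum_comp, Fintype.sum_prod_type, sum_mul]
    simp [Fin.consEquiv, List.ofFn_succ, mul_sum]

lemma sum_pow_eq_sum_ite_ofFn_prod {A ι : Type*} [Semiring A] [Fintype ι] [DecidableEq ι]
    (f : ι → A) (S : Finset ι) (n : ℕ) :
    (∑ i ∈ S, f i) ^ n =
      ∑ g : Fin n → ι, if ∀ j, g j ∈ S then (List.ofFn fun j => f (g j)).prod else 0 := by
  rw [← sum_ite_mem_eq, sum_pow_eq_sum_ofFn_prod]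
  refine Fintype.sum_congr _ _ fun g => ?_
  split_ifs with hg
  · simp [hg]
  · push Not at hg
    obtain ⟨j, hj⟩ := hg
    exact List.prod_eq_zero (List.mem_ofFn.mpr ⟨j, if_neg hj⟩)

lemma sum_ite_subset_neg_one_pow_card_compl {α : Type*} [Fintype α] [DecidableEq α]
    (T : Finset α) :
    ∑ S : Finset α, (if T ⊆ S then (-1 : ℤ) ^ #Sᶜ else 0) = if T = univ then 1 else 0 := by
  have hfilter : ({S | S ⊆ Tᶜ} : Finset (Finset α)) = Tᶜ.powerset := by ext; simp
  rw [← (Equiv.ofBijective _ compl_bijective).sum_comp]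
  simp only [Equiv.ofBijective_apply, compl_compl, subset_compl_comm (s := T)]
  rw [← sum_filter, hfilter, sum_powerset_neg_one_pow_card]
  simp only [compl_eq_empty_iff]

lemma sum_perm_eq_sum_ite_surjective {α M : Type*} [Fintype α] [DecidableEq α] [AddCommMonoid M]
    (F : (α → α) → M) :
    ∑ σ : Equiv.Perm α, F σ = ∑ g : α → α, if Function.Surjective g then F g else 0 := by
  rw [← sum_filter]
  refine sum_bij (fun σ _ => ⇑σ) (fun σ _ => by simpa using σ.surjective)
    (fun _ _ _ _ h => DFunLike.coe_injective h) (fun g hg => ?_) (fun _ _ => rfl)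
  have hbij := Finite.surjective_iff_bijective.mp (mem_filter.mp hg).2
  exact ⟨Equiv.ofBijective g hbij, mem_univ _, rfl⟩

lemma sum_perm_ofFn_prod_eq_sum_neg_one_pow_smul_pow {A : Type*} [Ring A] {k : ℕ}
    (p : Fin k → A) :
    ∑ σ : Equiv.Perm (Fin k), (List.ofFn fun i => p (σ i)).prod =
      ∑ S : Finset (Fin k), (-1 : ℤ) ^ #Sᶜ • (∑ i ∈ S, p i) ^ k := by
  simp only [sum_pow_eq_sum_ite_ofFn_prod, smul_sum]
  rw [sum_comm, sum_perm_eq_sum_ite_surjective fun g => (List.ofFn fun i => p (g i)).prod]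
  refine Fintype.sum_congr _ _ fun g => ?_
  have hcoeff : (∑ S : Finset (Fin k), if ∀ j, g j ∈ S then (-1 : ℤ) ^ #Sᶜ else 0) =
      if Function.Surjective g then 1 else 0 := by
    have h := sum_ite_subset_neg_one_pow_card_compl (univ.image g)
    simp only [image_subset_iff, mem_univ, true_implies] at h
    rw [h]
    exact if_congr (by simp [eq_univ_iff_forall, Function.Surjective]) rfl rfl
  calc _ = (if Function.Surjective g then (1 : ℤ) else 0) • (List.ofFn fun i => p (g i)).prod := by
        split_ifs <;> simp
    _ = _ := by simp only [← hcoeff, sum_smul, ite_smul, zero_smul, smul_ite, smul_zero]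

end Polarization

open LinearMap WithConv

section Convolution

variable {R H : Type*} [CommRing R] [Ring H] [Bialgebra R H]

lemma convProd_assoc (f g h : H →ₗ[R] H) :
    convProd (convProd f g) h = convProd f (convProd g h) :=
  congrArg ofConv (mul_assoc (toConv f) (toConv g) (toConv h))

lemma convProd_sub_left (f f' g : H →ₗ[R] H) :
    convProd (f - f') g = convProd f g - convProd f' g :=
  congrArg ofConv (sub_mul (toConv f) (toConv f') (toConv g))

lemma convProd_neg_right (f g : H →ₗ[R] H) :
    convProd f (-g) = -convProd f g :=
  congrArg ofConv (mul_neg (toConv f) (toConv g))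

lemma convProd_zero_left (g : H →ₗ[R] H) :
    convProd 0 g = 0 :=
  congrArg ofConv (zero_mul (toConv g))

lemma convProd_apply_eq_sum {ι : Type*} {x : H} (𝓡 : Coalgebra.Repr R x ι) (f g : H →ₗ[R] H) :
    convProd f g x = ∑ i ∈ 𝓡.index, f (𝓡.left i) * g (𝓡.right i) :=
  𝓡.convMul_apply (toConv f) (toConv g)

lemma mulLeft_comp_convProd (q : H) (f g : H →ₗ[R] H) :
    mulLeft R q ∘ₗ convProd f g = convProd (mulLeft R q ∘ₗ f) g := by
  ext x
  simp [convProd_apply_eq_sum (Coalgebra.Repr.arbitrary R x), mul_assoc]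

lemma mulRight_comp_convProd (q : H) (f g : H →ₗ[R] H) :
    mulRight R q ∘ₗ convProd f g = convProd f (mulRight R q ∘ₗ g) := by
  ext x
  simp [convProd_apply_eq_sum (Coalgebra.Repr.arbitrary R x), mul_assoc]

lemma convProd_mulRight_comp (q : H) (f g : H →ₗ[R] H) :
    convProd (mulRight R q ∘ₗ f) g = convProd f (mulLeft R q ∘ₗ g) := by
  ext x
  simp [convProd_apply_eq_sum (Coalgebra.Repr.arbitrary R x), mul_assoc]

lemma IsPrimitive.comul_mul_left {q : H} (hq : IsPrimitive R q) (x : H) :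
    Coalgebra.comul (R := R) (q * x) =
      map id (mulLeft R q) (Coalgebra.comul x) + map (mulLeft R q) id (Coalgebra.comul x) := by
  rw [Bialgebra.comul_mul, hq, add_mul]
  congr 1 <;> induction Coalgebra.comul (R := R) x with
  | zero => simp
  | tmul a b => simp
  | add s t hs ht => simp [mul_add, hs, ht]

lemma IsPrimitive.comul_mul_right {q : H} (hq : IsPrimitive R q) (x : H) :
    Coalgebra.comul (R := R) (x * q) =
      map id (mulRight R q) (Coalgebra.comul x) + map (mulRight R q) id (Coalgebra.comul x) := by
  rw [Bialgebra.comul_mul, hq, mul_add]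
  congr 1 <;> induction Coalgebra.comul (R := R) x with
  | zero => simp
  | tmul a b => simp
  | add s t hs ht => simp [add_mul, hs, ht]

lemma IsPrimitive.convProd_comp_mulLeft {q : H} (hq : IsPrimitive R q) (f g : H →ₗ[R] H) :
    convProd f g ∘ₗ mulLeft R q =
      convProd f (g ∘ₗ mulLeft R q) + convProd (f ∘ₗ mulLeft R q) g := by
  ext x
  simp only [convProd, comp_apply, LinearMap.add_apply, mulLeft_apply, hq.comul_mul_left, map_add,
    map_map, comp_id]

lemma IsPrimitive.convProd_comp_mulRight {q : H} (hq : IsPrimitive R q) (f g : H →ₗ[R] H) :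
    convProd f g ∘ₗ mulRight R q =
      convProd f (g ∘ₗ mulRight R q) + convProd (f ∘ₗ mulRight R q) g := by
  ext x
  simp only [convProd, comp_apply, LinearMap.add_apply, mulRight_apply, hq.comul_mul_right,
    map_add, map_map, comp_id]

end Convolution

section NegatedPrimitive

variable {R H : Type*} [CommRing R] [Ring H] [Bialgebra R H] {τ : H →ₗ[R] H} {q : H}

lemma comp_mulLeft_of_apply_eq_neg (hτ : ∀ x y : H, τ (x * y) = τ y * τ x) (hτq : τ q = -q) :
    τ ∘ₗ mulLeft R q = -(mulRight R q ∘ₗ τ) := by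
  ext x
  simp [hτ, hτq]

lemma comp_mulRight_of_apply_eq_neg (hτ : ∀ x y : H, τ (x * y) = τ y * τ x) (hτq : τ q = -q) :
    τ ∘ₗ mulRight R q = -(mulLeft R q ∘ₗ τ) := by
  ext x
  simp [hτ, hτq]

lemma convProd_id_comp_mulLeft (hτ : ∀ x y : H, τ (x * y) = τ y * τ x) (hq : IsPrimitive R q)
    (hτq : τ q = -q) :
    convProd id τ ∘ₗ mulLeft R q =
      mulLeft R q ∘ₗ convProd id τ - mulRight R q ∘ₗ convProd id τ := by
  rw [hq.convProd_comp_mulLeft, comp_mulLeft_of_apply_eq_neg hτ hτq, convProd_neg_right,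
    ← mulRight_comp_convProd, id_comp, ← comp_id (mulLeft R q), ← mulLeft_comp_convProd, comp_id]
  abel

lemma convProd_id_comp_mulRight (hτ : ∀ x y : H, τ (x * y) = τ y * τ x) (hq : IsPrimitive R q)
    (hτq : τ q = -q) : convProd id τ ∘ₗ mulRight R q = 0 := by
  rw [hq.convProd_comp_mulRight, comp_mulRight_of_apply_eq_neg hτ hτq, convProd_neg_right,
    id_comp, ← comp_id (mulRight R q), convProd_mulRight_comp, neg_add_cancel]

lemma convProd_convProd_id_comp_mulLeft (hτ : ∀ x y : H, τ (x * y) = τ y * τ x)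
    (hq : IsPrimitive R q) (hτq : τ q = -q) {G : H →ₗ[R] H}
    (hGL : G ∘ₗ mulLeft R q = mulLeft R q ∘ₗ G) :
    convProd (convProd id τ) G ∘ₗ mulLeft R q = mulLeft R q ∘ₗ convProd (convProd id τ) G := by
  rw [hq.convProd_comp_mulLeft, hGL, convProd_id_comp_mulLeft hτ hq hτq, convProd_sub_left,
    ← mulLeft_comp_convProd, convProd_mulRight_comp]
  abel

lemma convProd_convProd_id_comp_mulRight (hτ : ∀ x y : H, τ (x * y) = τ y * τ x)
    (hq : IsPrimitive R q) (hτq : τ q = -q) {G : H →ₗ[R] H}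
    (hGR : G ∘ₗ mulRight R q = mulRight R q ∘ₗ G) :
    convProd (convProd id τ) G ∘ₗ mulRight R q = mulRight R q ∘ₗ convProd (convProd id τ) G := by
  rw [hq.convProd_comp_mulRight, hGR, convProd_id_comp_mulRight hτ hq hτq, convProd_zero_left,
    add_zero, mulRight_comp_convProd]

end NegatedPrimitive

section FixedPrimitive

open Finset.HasAntidiagonal

variable {R H : Type*} [CommRing R] [Ring H] [Bialgebra R H] {q : H}

lemma IsPrimitive.sum {ι : Type*} {p : ι → H} (hp : ∀ i, IsPrimitive R (p i)) (S : Finset ι) :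
    IsPrimitive R (∑ i ∈ S, p i) := by
  unfold IsPrimitive at hp ⊢
  simp only [map_sum, hp, Finset.sum_add_distrib, TensorProduct.tmul_sum, TensorProduct.sum_tmul]

lemma IsPrimitive.comul_pow (hq : IsPrimitive R q) (j : ℕ) :
    Coalgebra.comul (R := R) (q ^ j) =
      ∑ m ∈ antidiagonal j, j.choose m.1 • ((q ^ m.1) ⊗ₜ[R] (q ^ m.2)) := by
  have hcomm : Commute (q ⊗ₜ[R] (1 : H)) (1 ⊗ₜ q) := by simp [Commute, SemiconjBy]
  rw [← Bialgebra.comulAlgHom_apply, map_pow, Bialgebra.comulAlgHom_apply, hq, add_comm,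
    hcomm.add_pow']
  simp [Algebra.TensorProduct.tmul_pow]

lemma IsPrimitive.convProd_apply_pow (hq : IsPrimitive R q) {f g : H →ₗ[R] H} {c d : R}
    (hf : ∀ i, f (q ^ i) = c ^ i • q ^ i) (hg : ∀ i, g (q ^ i) = d ^ i • q ^ i) (j : ℕ) :
    convProd f g (q ^ j) = (c + d) ^ j • q ^ j := by
  rw [convProd, comp_apply, comp_apply, hq.comul_pow, (Commute.all c d).add_pow', Finset.sum_smul]
  simp only [map_sum, map_nsmul, TensorProduct.map_tmul, mul'_apply, hf, hg]
  refine Finset.sum_congr rfl fun m hm => ?_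
  rw [smul_mul_smul_comm, ← pow_add, mem_antidiagonal.mp hm, smul_assoc]

lemma apply_pow_of_antimul (τ : H →ₗ[R] H) (hτ1 : τ 1 = 1) (hτ : ∀ x y : H, τ (x * y) = τ y * τ x)
    (hτq : τ q = q) (j : ℕ) : τ (q ^ j) = q ^ j := by
  induction j with
  | zero => rw [pow_zero, hτ1]
  | succ j ih => rw [pow_succ, hτ, hτq, ih, pow_mul_comm']

end FixedPrimitive

section ListProd

variable {R H : Type*} [CommRing R] [Ring H] [Bialgebra R H] {Ψ : H →ₗ[R] H} {l : List H}

lemma map_list_prod_mul (hl : ∀ q ∈ l, Ψ ∘ₗ mulLeft R q = mulLeft R q ∘ₗ Ψ) (x : H) :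
    Ψ (l.prod * x) = l.prod * Ψ x := by
  have hprod : Ψ ∘ₗ mulLeft R l.prod = mulLeft R l.prod ∘ₗ Ψ := by
    refine List.prod_induction _ (fun a b ha hb => ?_) (by rw [mulLeft_one, id_comp, comp_id]) hl
    rw [mulLeft_mul, ← comp_assoc, ha, comp_assoc, hb, comp_assoc]
  exact LinearMap.congr_fun hprod x

lemma map_mul_list_prod (hl : ∀ q ∈ l, Ψ ∘ₗ mulRight R q = mulRight R q ∘ₗ Ψ) (x : H) :
    Ψ (x * l.prod) = Ψ x * l.prod := by
  have hprod : Ψ ∘ₗ mulRight R l.prod = mulRight R l.prod ∘ₗ Ψ := by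
    refine List.prod_induction _ (fun a b ha hb => ?_) (by rw [mulRight_one, id_comp, comp_id]) hl
    rw [mulRight_mul, ← comp_assoc, hb, comp_assoc, ha, comp_assoc]
  exact LinearMap.congr_fun hprod x

end ListProd

section Riffle

variable {R H : Type*} [CommRing R] [Ring H] [Bialgebra R H] (τ : H →ₗ[R] H)

lemma psiPlus_add_two {a : ℕ} (ha : 1 ≤ a) :
    PsiPlus τ (a + 2) = convProd (convProd id τ) (PsiPlus τ a) := by
  obtain ⟨b, rfl⟩ := Nat.exists_eq_add_of_le' ha
  exact (convProd_assoc _ _ _).symm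

lemma psiPlus_comp_mulLeft_and_mulRight_of_odd (hτ : ∀ x y : H, τ (x * y) = τ y * τ x) {q : H}
    (hq : IsPrimitive R q) (hτq : τ q = -q) {a : ℕ} (ha : Odd a) :
    PsiPlus τ a ∘ₗ mulLeft R q = mulLeft R q ∘ₗ PsiPlus τ a ∧
      PsiPlus τ a ∘ₗ mulRight R q = mulRight R q ∘ₗ PsiPlus τ a := by
  obtain ⟨m, rfl⟩ := ha
  induction m with
  | zero => exact ⟨rfl, rfl⟩
  | succ m ih =>
    rw [show 2 * (m + 1) + 1 = 2 * m + 1 + 2 by ring, psiPlus_add_two τ (by omega)]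
    exact ⟨convProd_convProd_id_comp_mulLeft hτ hq hτq ih.1,
      convProd_convProd_id_comp_mulRight hτ hq hτq ih.2⟩

lemma psiAux_apply_pow (hτ1 : τ 1 = 1) (hτ : ∀ x y : H, τ (x * y) = τ y * τ x) {q : H}
    (hq : IsPrimitive R q) (hτq : τ q = q) (n j : ℕ) :
    (PsiAux τ n).1 (q ^ j) = ((n + 1 : ℕ) : R) ^ j • q ^ j ∧
      (PsiAux τ n).2 (q ^ j) = ((n + 1 : ℕ) : R) ^ j • q ^ j := by
  induction n generalizing j with
  | zero => simp [PsiAux, apply_pow_of_antimul τ hτ1 hτ hτq]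
  | succ n ih =>
    have hid : ∀ i, (id : H →ₗ[R] H) (q ^ i) = (1 : R) ^ i • q ^ i := by simp
    have hτpow : ∀ i, τ (q ^ i) = (1 : R) ^ i • q ^ i := by
      simp [apply_pow_of_antimul τ hτ1 hτ hτq]
    have hsucc : (1 : R) + ((n + 1 : ℕ) : R) = ((n + 1 + 1 : ℕ) : R) := by push_cast; ring
    rw [← hsucc]
    exact ⟨hq.convProd_apply_pow hid (fun i => (ih i).2) j,
      hq.convProd_apply_pow hτpow (fun i => (ih i).1) j⟩

lemma psiPlus_apply_pow (hτ1 : τ 1 = 1) (hτ : ∀ x y : H, τ (x * y) = τ y * τ x) {q : H}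
    (hq : IsPrimitive R q) (hτq : τ q = q) {a : ℕ} (ha : 1 ≤ a) (j : ℕ) :
    PsiPlus τ a (q ^ j) = (a : R) ^ j • q ^ j := by
  obtain ⟨b, rfl⟩ := Nat.exists_eq_add_of_le' ha
  exact (psiAux_apply_pow τ hτ1 hτ hq hτq b j).1

lemma psiPlus_apply_sum_perm_ofFn_prod (hτ1 : τ 1 = 1)
    (hτ : ∀ x y : H, τ (x * y) = τ y * τ x) {k : ℕ} {p : Fin k → H}
    (hp : ∀ i, IsPrimitive R (p i)) (hτp : ∀ i, τ (p i) = p i) {a : ℕ} (ha : 1 ≤ a) :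
    PsiPlus τ a (∑ σ : Equiv.Perm (Fin k), (List.ofFn fun i => p (σ i)).prod) =
      (a : R) ^ k • ∑ σ : Equiv.Perm (Fin k), (List.ofFn fun i => p (σ i)).prod := by
  have hpow (S : Finset (Fin k)) :
      PsiPlus τ a ((∑ i ∈ S, p i) ^ k) = (a : R) ^ k • (∑ i ∈ S, p i) ^ k :=
    psiPlus_apply_pow τ hτ1 hτ (IsPrimitive.sum hp S) (by simp [hτp]) ha k
  rw [sum_perm_ofFn_prod_eq_sum_neg_one_pow_smul_pow, map_sum, Finset.smul_sum]
  exact Finset.sum_congr rfl fun S _ => by rw [map_zsmul, hpow, smul_comm]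

end Riffle

theorem flip_riffle_odd_plus_eigenvectors_general
    {R H : Type*} [CommRing R] [Ring H] [Bialgebra R H]
    (τ : H →ₗ[R] H)
    (halg1 : τ 1 = 1) (halgmul : ∀ x y : H, τ (x * y) = τ y * τ x)
    (k : ℕ) (p : Fin k → H) (hp : ∀ i, IsPrimitive R (p i)) (hpfix : ∀ i, τ (p i) = p i)
    (kb : ℕ) (pbar : Fin kb → H) (hpbar : ∀ j, IsPrimitive R (pbar j))
    (hpbarneg : ∀ j, τ (pbar j) = -(pbar j))
    (a : ℕ) (haodd : Odd a) :
    PsiPlus τ a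
        ((List.ofFn pbar).prod *
          (∑ σ : Equiv.Perm (Fin k), (List.ofFn fun i => p (σ i)).prod)) =
      ((a : R)) ^ k •
        ((List.ofFn pbar).prod *
          (∑ σ : Equiv.Perm (Fin k), (List.ofFn fun i => p (σ i)).prod)) ∧
    PsiPlus τ a
        ((∑ σ : Equiv.Perm (Fin k), (List.ofFn fun i => p (σ i)).prod) *
          (List.ofFn pbar).prod) =
      ((a : R)) ^ k •
        ((∑ σ : Equiv.Perm (Fin k), (List.ofFn fun i => p (σ i)).prod) *
          (List.ofFn pbar).prod) := by
  have hpbar_comm (j : Fin kb) :=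
    psiPlus_comp_mulLeft_and_mulRight_of_odd τ halgmul (hpbar j) (hpbarneg j) haodd
  have hP := psiPlus_apply_sum_perm_ofFn_prod τ halg1 halgmul hp hpfix haodd.pos
  constructor
  · rw [map_list_prod_mul (List.forall_mem_ofFn_iff.mpr fun j => (hpbar_comm j).1), hP,
      mul_smul_comm]
  · rw [map_mul_list_prod (List.forall_mem_ofFn_iff.mpr fun j => (hpbar_comm j).2), hP,
      smul_mul_assoc]

/-- `τ` a linear involution on a bialgebra `H`, an algebra antimorphism and
coalgebra (anti)morphism; `p_1,…,p_k` `τ`-invariant primitives, `p̄_1,…,p̄_k̄` `τ`-negating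
primitives, `P` the symmetrised product of the `p_i`. Then for every odd `a ≥ 1`:
`Ψ_a^+(p̄_1⋯p̄_k̄·P) = (a·1_R)^k • (p̄_1⋯p̄_k̄·P)` and
`Ψ_a^+(P·p̄_1⋯p̄_k̄) = (a·1_R)^k • (P·p̄_1⋯p̄_k̄)`. -/
theorem flip_riffle_odd_plus_eigenvectors
    {R H : Type*} [CommRing R] [Ring H] [Bialgebra R H]
    (τ : H →ₗ[R] H)
    (hinv : ∀ x, τ (τ x) = x)
    (halg1 : τ 1 = 1) (halgmul : ∀ x y : H, τ (x * y) = τ y * τ x)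
    (hco : IsCoalgMorph τ ∨ IsCoalgAntimorph τ)
    (k : ℕ) (p : Fin k → H) (hp : ∀ i, IsPrimitive R (p i)) (hpfix : ∀ i, τ (p i) = p i)
    (kb : ℕ) (pbar : Fin kb → H) (hpbar : ∀ j, IsPrimitive R (pbar j))
    (hpbarneg : ∀ j, τ (pbar j) = -(pbar j))
    (a : ℕ) (ha : 1 ≤ a) (haodd : Odd a) :
    PsiPlus τ a
        ((List.ofFn pbar).prod *
          (∑ σ : Equiv.Perm (Fin k), (List.ofFn fun i => p (σ i)).prod)) =
      ((a : R)) ^ k •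
        ((List.ofFn pbar).prod *
          (∑ σ : Equiv.Perm (Fin k), (List.ofFn fun i => p (σ i)).prod)) ∧
    PsiPlus τ a
        ((∑ σ : Equiv.Perm (Fin k), (List.ofFn fun i => p (σ i)).prod) *
          (List.ofFn pbar).prod) =
      ((a : R)) ^ k •
        ((∑ σ : Equiv.Perm (Fin k), (List.ofFn fun i => p (σ i)).prod) *
          (List.ofFn pbar).prod) :=
  flip_riffle_odd_plus_eigenvectors_general τ halg1 halgmul k p hp hpfix kb pbar hpbar hpbarneg a
    haodd
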